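/- arXiv:2006.05436 — 9 statements merged into one kernel-verified Lean document; each statement's English description precedes it below -/
import Mathlib

section
/- Given a standard neighbourhood model M_st = (W, N_st, V), define the bi-neighbourhood model M_bi = (W, N_bi, V) with N_bi(w) = {(α, W \ α) | α ∈ N_st(w)}. Then for every modal formula A and every world w ∈ W, M_bi, w ⊩ A (in the bi-neighbourhood forcing relation) if and only if M_st, w ⊩ A (in the standard forcing relation). -/
inductive Fm where
  | atom : ℕ → Fm
  | bot : Fm
  | top : Fm
  | and : Fm → Fm → Fm
  | or : Fm → Fm → Fm
  | imp : Fm → Fm → Fm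
  | box : Fm → Fm

def stForce {W : Type*} (N : W → Set (Set W)) (V : ℕ → Set W) : W → Fm → Prop
  | w, .atom p => w ∈ V p
  | _, .bot => False
  | _, .top => True
  | w, .and A B => stForce N V w A ∧ stForce N V w B
  | w, .or A B => stForce N V w A ∨ stForce N V w B
  | w, .imp A B => stForce N V w A → stForce N V w B
  | w, .box A => {v | stForce N V v A} ∈ N w

def biForce {W : Type*} (N : W → Set (Set W × Set W)) (V : ℕ → Set W) : W → Fm → Prop
  | w, .atom p => w ∈ V p
  | _, .bot => False
  | _, .top => True
  | w, .and A B => biForce N V w A ∧ biForce N V w B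
  | w, .or A B => biForce N V w A ∨ biForce N V w B
  | w, .imp A B => biForce N V w A → biForce N V w B
  | w, .box A => ∃ p ∈ N w, p.1 ⊆ {v | biForce N V v A} ∧ {v | biForce N V v A} ⊆ p.2ᶜ

def relForce {W : Type*} (Wi : Set W) (R : W → W → Prop) (V : ℕ → Set W) : W → Fm → Prop
  | w, .atom p => w ∈ V p
  | _, .bot => False
  | _, .top => True
  | w, .and A B => relForce Wi R V w A ∧ relForce Wi R V w B
  | w, .or A B => relForce Wi R V w A ∨ relForce Wi R V w B
  | w, .imp A B => relForce Wi R V w A → relForce Wi R V w B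
  | w, .box A => w ∉ Wi ∧ ∀ v, R w v → relForce Wi R V v A

def SubfClosed (S : Set Fm) : Prop :=
  (∀ A B, Fm.and A B ∈ S → A ∈ S ∧ B ∈ S) ∧
  (∀ A B, Fm.or A B ∈ S → A ∈ S ∧ B ∈ S) ∧
  (∀ A B, Fm.imp A B ∈ S → A ∈ S ∧ B ∈ S) ∧
  (∀ A, Fm.box A ∈ S → A ∈ S)

theorem stmt0 {W : Type*} [Nonempty W] (Nst : W → Set (Set W)) (V : ℕ → Set W) :
    ∀ (A : Fm) (w : W),
      biForce (fun w => {p | ∃ α ∈ Nst w, p = (α, αᶜ)}) V w A ↔ stForce Nst V w A := by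
  intro A
  induction A with
  | atom p => intro w; rfl
  | bot => intro w; rfl
  | top => intro w; rfl
  | and A B ihA ihB => intro w; simp only [biForce, stForce, ihA, ihB]
  | or A B ihA ihB => intro w; simp only [biForce, stForce, ihA, ihB]
  | imp A B ihA ihB => intro w; simp only [biForce, stForce, ihA, ihB]
  | box A ih =>
    intro w
    have hset : {v | biForce (fun w => {p | ∃ α ∈ Nst w, p = (α, αᶜ)}) V v A}
        = {v | stForce Nst V v A} := Set.ext fun v => ih v
    constructor
    · rintro ⟨p, ⟨α, hα, rfl⟩, h1, h2⟩
      have : α = {v | stForce Nst V v A} := by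
        rw [hset] at h1 h2
        apply Set.Subset.antisymm h1
        intro v hv
        by_contra hc
        exact h2 hv hc
      show {v | stForce Nst V v A} ∈ Nst w
      rwa [← this]
    · intro h
      simp only [biForce]
      exact ⟨({v | stForce Nst V v A}, {v | stForce Nst V v A}ᶜ), ⟨_, h, rfl⟩,
        by rw [hset], by rw [hset]; simp⟩
end

section
/- Given a bi-neighbourhood model M_bi = (W, N_bi, V), define the standard model M_st = (W, N_st, V) by N_st(w) = {γ ⊆ W | there is (α, β) ∈ N_bi(w) with α ⊆ γ ⊆ W \ β}. Then for every modal formula A and every world w ∈ W, M_st, w ⊩ A if and only if M_bi, w ⊩ A. -/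
theorem stmt3 {W : Type*} [Nonempty W] (Nbi : W → Set (Set W × Set W)) (V : ℕ → Set W) :
    ∀ (A : Fm) (w : W),
      stForce (fun w => {γ | ∃ p ∈ Nbi w, p.1 ⊆ γ ∧ γ ⊆ p.2ᶜ}) V w A ↔ biForce Nbi V w A := by
  intro A
  induction A with
  | atom p => intro w; simp [stForce, biForce]
  | bot => intro w; simp [stForce, biForce]
  | top => intro w; simp [stForce, biForce]
  | and A B ihA ihB => intro w; simp only [stForce, biForce]; rw [ihA w, ihB w]
  | or A B ihA ihB => intro w; simp only [stForce, biForce]; rw [ihA w, ihB w]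
  | imp A B ihA ihB => intro w; simp only [stForce, biForce]; rw [ihA w, ihB w]
  | box A ih =>
    intro w
    have h : {v | stForce (fun w => {γ | ∃ p ∈ Nbi w, p.1 ⊆ γ ∧ γ ⊆ p.2ᶜ}) V v A}
        = {v | biForce Nbi V v A} := Set.ext fun v => ih v
    simp only [stForce, biForce]
    rw [h]; rfl
end

section
/- Let M_bi = (W, N_bi, V) be a bi-neighbourhood model satisfying condition (C): (α, β), (γ, δ) ∈ N_bi(w) implies (α ∩ γ, β ∪ δ) ∈ N_bi(w). Then the standard model with N_st(w) = {γ ⊆ W | ∃(α, β) ∈ N_bi(w), α ⊆ γ ⊆ W \ β} is closed under intersection: γ, δ ∈ N_st(w) implies γ ∩ δ ∈ N_st(w). -/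
theorem stmt5 {W : Type*} [Nonempty W] (Nbi : W → Set (Set W × Set W)) (V : ℕ → Set W)
    (hC : ∀ w, ∀ α β γ δ : Set W, (α, β) ∈ Nbi w → (γ, δ) ∈ Nbi w → (α ∩ γ, β ∪ δ) ∈ Nbi w) :
    ∀ (w : W) (γ δ : Set W),
      γ ∈ {σ | ∃ p ∈ Nbi w, p.1 ⊆ σ ∧ σ ⊆ p.2ᶜ} →
      δ ∈ {σ | ∃ p ∈ Nbi w, p.1 ⊆ σ ∧ σ ⊆ p.2ᶜ} →
      γ ∩ δ ∈ {σ : Set W | ∃ p ∈ Nbi w, p.1 ⊆ σ ∧ σ ⊆ p.2ᶜ} := by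
  rintro w γ δ ⟨⟨a,b⟩, h1, h2, h3⟩ ⟨⟨c,d⟩, h4, h5, h6⟩
  refine ⟨(a ∩ c, b ∪ d), hC w a b c d h1 h4, ?_, ?_⟩
  · exact Set.inter_subset_inter h2 h5
  · intro x hx
    simp only [Set.mem_compl_iff, Set.mem_union]
    rintro (h | h)
    exacts [h3 hx.1 h, h6 hx.2 h]
end

section
/- Let M_bi = (W, N_bi, V) be a bi-neighbourhood model satisfying condition (D): if (α, β), (γ, δ) ∈ N_bi(w), then α ∩ γ ≠ ∅ or β ∩ δ ≠ ∅. Then the standard model with N_st(w) = {γ | ∃(α, β) ∈ N_bi(w), α ⊆ γ ⊆ W \ β} satisfies: γ ∈ N_st(w) implies W \ γ ∉ N_st(w). -/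
theorem stmt6 {W : Type*} [Nonempty W] (Nbi : W → Set (Set W × Set W)) (V : ℕ → Set W)
    (hD : ∀ w, ∀ α β γ δ : Set W, (α, β) ∈ Nbi w → (γ, δ) ∈ Nbi w →
      (α ∩ γ).Nonempty ∨ (β ∩ δ).Nonempty) :
    ∀ (w : W) (γ : Set W),
      γ ∈ {σ | ∃ p ∈ Nbi w, p.1 ⊆ σ ∧ σ ⊆ p.2ᶜ} →
      γᶜ ∉ {σ : Set W | ∃ p ∈ Nbi w, p.1 ⊆ σ ∧ σ ⊆ p.2ᶜ} := by
  rintro w γ ⟨⟨α, β⟩, hm, hα, hβ⟩ ⟨⟨α', β'⟩, hm', hα', hβ'⟩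
  rcases hD w α β α' β' hm hm' with ⟨x, hx, hx'⟩ | ⟨x, hx, hx'⟩
  · exact hα' hx' (hα hx)
  · have h1 : x ∈ γᶜ := fun h => hβ h hx
    have h2 : x ∈ γ := by
      by_contra h
      exact hβ' h hx'
    exact h1 h2
end

section
/- Let M_bi = (W, N_bi, V) be a bi-neighbourhood model satisfying condition (RD_n+): if (α₁, β₁), ..., (αₙ, βₙ) ∈ N_bi(w), then α₁ ∩ ... ∩ αₙ ≠ ∅. Then the standard model with N_st(w) = {γ | ∃(α, β) ∈ N_bi(w), α ⊆ γ ⊆ W \ β} satisfies: if γ₁, ..., γₙ ∈ N_st(w) then γ₁ ∩ ... ∩ γₙ ≠ ∅. -/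
theorem stmt7 {W : Type*} [Nonempty W] (Nbi : W → Set (Set W × Set W)) (V : ℕ → Set W)
    (n : ℕ) (hn : 1 ≤ n)
    (hRD : ∀ w, ∀ p : Fin n → Set W × Set W, (∀ i, p i ∈ Nbi w) →
      (⋂ i, (p i).1).Nonempty) :
    ∀ (w : W) (γ : Fin n → Set W),
      (∀ i, γ i ∈ {σ | ∃ p ∈ Nbi w, p.1 ⊆ σ ∧ σ ⊆ p.2ᶜ}) →
      (⋂ i, γ i).Nonempty := by
  intro w γ hγ
  choose p hp hsub _ using hγ
  obtain ⟨x, hx⟩ := hRD w p hp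
  exact ⟨x, Set.mem_iInter.2 fun i => hsub i (Set.mem_iInter.1 hx i)⟩
end

section
/- Let M_bi = (W, N_bi, V) be a bi-neighbourhood model and S a set of formulas closed under subformulas. Define the standard model M_st = (W, N_st, V) by N_st(w) = {[[A]]_bi | □A ∈ S and M_bi, w ⊩ □A}. Then for every formula A ∈ S and every w ∈ W, M_st, w ⊩ A if and only if M_bi, w ⊩ A. -/
theorem stmt8 {W : Type*} [Nonempty W] (Nbi : W → Set (Set W × Set W)) (V : ℕ → Set W)
    (S : Set Fm) (hS : SubfClosed S) :
    ∀ A ∈ S, ∀ w : W,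
      stForce (fun w => {X | ∃ A, Fm.box A ∈ S ∧ biForce Nbi V w (Fm.box A) ∧
        X = {v | biForce Nbi V v A}}) V w A ↔ biForce Nbi V w A := by
  intro A
  induction A with
  | atom p => intro _ w; rfl
  | bot => intro _ w; rfl
  | top => intro _ w; rfl
  | and A B ihA ihB =>
    intro hmem w
    obtain ⟨hA, hB⟩ := hS.1 A B hmem
    exact and_congr (ihA hA w) (ihB hB w)
  | or A B ihA ihB =>
    intro hmem w
    obtain ⟨hA, hB⟩ := hS.2.1 A B hmem
    exact or_congr (ihA hA w) (ihB hB w)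
  | imp A B ihA ihB =>
    intro hmem w
    obtain ⟨hA, hB⟩ := hS.2.2.1 A B hmem
    exact imp_congr (ihA hA w) (ihB hB w)
  | box A ihA =>
    intro hmem w
    have hA := hS.2.2.2 A hmem
    have hset : {v | stForce (fun w => {X | ∃ A, Fm.box A ∈ S ∧ biForce Nbi V w (Fm.box A) ∧
        X = {v | biForce Nbi V v A}}) V v A} = {v | biForce Nbi V v A} := by
      ext v; exact ihA hA v
    constructor
    · rintro ⟨B, hBmem, hBforce, hEq⟩
      obtain ⟨p, hp, h1, h2⟩ := hBforce
      refine ⟨p, hp, ?_, ?_⟩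
      · rwa [← hEq, hset] at h1
      · rwa [← hEq, hset] at h2
    · intro h
      exact ⟨A, hmem, h, hset⟩
end

section
/- A formula A is valid in all standard neighbourhood models if and only if A is valid in all bi-neighbourhood models. -/
lemma st_of_bi {W : Type*} (N : W → Set (Set W × Set W)) (V : ℕ → Set W) (w : W) (A : Fm) :
    stForce (fun w => {γ | ∃ p ∈ N w, p.1 ⊆ γ ∧ γ ⊆ p.2ᶜ}) V w A ↔ biForce N V w A := by
  induction A generalizing w with
  | atom p => rfl
  | bot => rfl
  | top => rfl
  | and A B ihA ihB => exact and_congr (ihA w) (ihB w)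
  | or A B ihA ihB => exact or_congr (ihA w) (ihB w)
  | imp A B ihA ihB => exact imp_congr (ihA w) (ihB w)
  | box A ih =>
    show ({v | _} ∈ _) ↔ _
    have hset : {v | stForce (fun w => {γ | ∃ p ∈ N w, p.1 ⊆ γ ∧ γ ⊆ p.2ᶜ}) V v A}
        = {v | biForce N V v A} := Set.ext fun v => ih v
    rw [hset]
    simp only [Set.mem_setOf_eq, biForce]

lemma bi_of_st {W : Type*} (N : W → Set (Set W)) (V : ℕ → Set W) (w : W) (A : Fm) :
    biForce (fun w => {p | p.1 ∈ N w ∧ p.2 = p.1ᶜ}) V w A ↔ stForce N V w A := by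
  induction A generalizing w with
  | atom p => rfl
  | bot => rfl
  | top => rfl
  | and A B ihA ihB => exact and_congr (ihA w) (ihB w)
  | or A B ihA ihB => exact or_congr (ihA w) (ihB w)
  | imp A B ihA ihB => exact imp_congr (ihA w) (ihB w)
  | box A ih =>
    have hset : {v | biForce (fun w => {p : Set W × Set W | p.1 ∈ N w ∧ p.2 = p.1ᶜ}) V v A}
        = {v | stForce N V v A} := Set.ext fun v => ih v
    show (∃ p ∈ _, _) ↔ ({v | _} ∈ _)
    rw [hset]
    constructor
    · rintro ⟨⟨α, β⟩, ⟨hα, hβ⟩, h1, h2⟩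
      simp only at hβ
      subst hβ
      have : α = {v | stForce N V v A} :=
        Set.Subset.antisymm h1 (by simpa using h2)
      exact this ▸ hα
    · intro h
      exact ⟨({v | stForce N V v A}, {v | stForce N V v A}ᶜ), ⟨h, rfl⟩,
        subset_rfl, by simp⟩

theorem stmt11 (A : Fm) :
    (∀ (W : Type) [Nonempty W] (N : W → Set (Set W)) (V : ℕ → Set W) (w : W),
      stForce N V w A) ↔
    (∀ (W : Type) [Nonempty W] (N : W → Set (Set W × Set W)) (V : ℕ → Set W) (w : W),
      biForce N V w A) := by
  constructor
  · intro h W _ N V w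
    exact (st_of_bi N V w A).mp (h W _ V w)
  · intro h W _ N V w
    exact (bi_of_st N V w A).mp (h W _ V w)
end

section
/- Every bi-neighbourhood model satisfying condition (D) (if (α, β), (γ, δ) ∈ N(w) then α ∩ γ ≠ ∅ or β ∩ δ ≠ ∅) validates axiom D: for every formula A and every world w, it is not the case that both w ⊩ □A and w ⊩ □¬A. -/
theorem stmt16 {W : Type*} [Nonempty W] (N : W → Set (Set W × Set W)) (V : ℕ → Set W)
    (hD : ∀ w, ∀ α β γ δ : Set W, (α, β) ∈ N w → (γ, δ) ∈ N w →
      (α ∩ γ).Nonempty ∨ (β ∩ δ).Nonempty) :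
    ∀ (A : Fm) (w : W),
      ¬ (biForce N V w (Fm.box A) ∧ biForce N V w (Fm.box (Fm.imp A Fm.bot))) := by
  rintro A w ⟨⟨⟨α, β⟩, hab, h1, h2⟩, ⟨⟨γ, δ⟩, hcd, h3, h4⟩⟩
  rcases hD w α β γ δ hab hcd with ⟨x, hx1, hx2⟩ | ⟨x, hx1, hx2⟩
  · exact (h3 hx2) (h1 hx1)
  · have hA : ¬ biForce N V x A := fun h => h2 h hx1
    have hnn : ¬ (biForce N V x A → False) := fun h => h4 h hx2
    exact hnn hA
end

section
/- Every bi-neighbourhood model satisfying condition (RD_n+) (if (α₁, β₁), ..., (αₙ, βₙ) ∈ N(w), then α₁ ∩ ... ∩ αₙ ≠ ∅) validates the rule RD_n+: if the formula ¬(A₁ ∧ ... ∧ Aₙ) is valid in the model, then ¬(□A₁ ∧ ... ∧ □Aₙ) is valid in the model. -/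
theorem stmt17 {W : Type*} [Nonempty W] (N : W → Set (Set W × Set W)) (V : ℕ → Set W)
    (n : ℕ) (hn : 1 ≤ n)
    (hRD : ∀ w, ∀ p : Fin n → Set W × Set W, (∀ i, p i ∈ N w) → (⋂ i, (p i).1).Nonempty)
    (A : Fin n → Fm)
    (hvalid : ∀ w : W, ¬ ∀ i, biForce N V w (A i)) :
    ∀ w : W, ¬ ∀ i, biForce N V w (Fm.box (A i)) := by
  intro w hbox
  choose p hp hsub _ using fun i => (hbox i : ∃ q ∈ N w, _)
  obtain ⟨v, hv⟩ := hRD w p hp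
  exact hvalid v fun i => hsub i (Set.mem_iInter.mp hv i)
end
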